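/- Let i and n be natural numbers and let A be a left brace of cardinality p^n for a prime p with p > n+1. Then p^i·A = {p^i·a : a ∈ A} is an ideal of A for each i, and A^{∘p^i} = p^i·A, where A^{∘p^i} denotes the subgroup of the group (A,∘) generated by the elements a^{∘p^i} for a ∈ A (the product of p^i copies of a under ∘). -/

import Mathlib

universe u

/-- A left brace: `(A,+)` abelian group, `(A,∘)` a group, with
`a∘(b+c)+a = a∘b+a∘c`. -/
structure LeftBrace (A : Type u) [AddCommGroup A] where
  circ : A → A → A
  one : A
  inv : A → A
  circ_assoc : ∀ a b c : A, circ (circ a b) c = circ a (circ b c)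
  one_circ : ∀ a : A, circ one a = a
  circ_one : ∀ a : A, circ a one = a
  inv_circ : ∀ a : A, circ (inv a) a = one
  circ_add : ∀ a b c : A, circ a (b + c) + a = circ a b + circ a c

/-- `a*b = a∘b - a - b`. -/
def LeftBrace.star {A : Type u} [AddCommGroup A] (B : LeftBrace A) (a b : A) : A :=
  B.circ a b - a - b

/-- `ann(k) = {a : k•a = 0}`, as an additive subgroup. -/
def annSub (A : Type u) [AddCommGroup A] (k : ℕ) : AddSubgroup A where
  carrier := {a : A | k • a = 0}
  zero_mem' := by simp
  add_mem' := by
    intro a b ha hb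
    have ha' : k • a = 0 := ha
    have hb' : k • b = 0 := hb
    show k • (a + b) = 0
    rw [smul_add, ha', hb', add_zero]
  neg_mem' := by
    intro a ha
    have ha' : k • a = 0 := ha
    show k • (-a) = 0
    rw [smul_neg, ha', neg_zero]

/-- The coset `[a]` of `a` in `A/ann(k)`. -/
def qmk {A : Type u} [AddCommGroup A] (k : ℕ) (a : A) : A ⧸ annSub A k :=
  QuotientAddGroup.mk a

/-- Evaluation of a non-associative word under a binary operation `op`,
substituting `f i` for the variable `i`. -/
def wEval {α : Type*} {β : Type*} (op : β → β → β) (f : α → β) : FreeMagma α → β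
  | FreeMagma.of a => f a
  | FreeMagma.mul x y => op (wEval op f x) (wEval op f y)

/-- The list of leaves (occurrences of variables, left to right) of a word. -/
def wLeaves {α : Type*} : FreeMagma α → List α
  | FreeMagma.of a => [a]
  | FreeMagma.mul x y => wLeaves x ++ wLeaves y

/-- The last (rightmost) variable of a word. -/
def wLast {α : Type*} : FreeMagma α → α
  | FreeMagma.of a => a
  | FreeMagma.mul _ y => wLast y

/-- The number of occurrences of the variable `a` in a word. -/
def wCount {α : Type*} [DecidableEq α] (a : α) : FreeMagma α → ℕ
  | FreeMagma.of b => if b = a then 1 else 0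
  | FreeMagma.mul x y => wCount a x + wCount a y

/-- The length (number of variable occurrences) of a word. -/
def wLen {α : Type*} : FreeMagma α → ℕ
  | FreeMagma.of _ => 1
  | FreeMagma.mul x y => wLen x + wLen y

/-- Left-normed product `a₁·(a₂·(⋯(aₘ·b)⋯))`. -/
def leftProd {Q : Type*} (mul : Q → Q → Q) : List Q → Q → Q
  | [], b => b
  | a :: l, b => mul a (leftProd mul l b)

/-- `circPow B a k` is the product of `k` copies of `a` under `∘`. -/
def circPow {A : Type u} [AddCommGroup A] (B : LeftBrace A) (a : A) : ℕ → A
  | 0 => B.one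
  | k + 1 => B.circ a (circPow B a k)

/-- `eSeq B a (i-1)` is `a_i`, where `a_1 = a` and `a_{i+1} = a * a_i`. -/
def eSeq {A : Type u} [AddCommGroup A] (B : LeftBrace A) (a : A) : ℕ → A
  | 0 => a
  | i + 1 => B.star a (eSeq B a i)

/-- `starIter B a b (i-1)` is `e_i`, where `e_1 = a*b` and `e_{i+1} = a*e_i`. -/
def starIter {A : Type u} [AddCommGroup A] (B : LeftBrace A) (a b : A) : ℕ → A
  | 0 => B.star a b
  | i + 1 => B.star a (starIter B a b i)

/-- `iterOp op u v i` is `u ⊙ (u ⊙ (⋯ (u ⊙ v)))` with `i` applications of `u ⊙ ·`. -/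
def iterOp {Q : Type*} (op : Q → Q → Q) (u v : Q) : ℕ → Q
  | 0 => v
  | i + 1 => op u (iterOp op u v i)

/-- `f(a) = Σ_{i=1}^{p−1} (C(p−1,i−1)/i)·e_i` where `e_1 = a`, `e_{i+1} = a*e_i`. -/
def fMap {A : Type u} [AddCommGroup A] (B : LeftBrace A) (p : ℕ) (a : A) : A :=
  ∑ i ∈ Finset.Icc 1 (p - 1), (Nat.choose (p - 1) (i - 1) / i) • eSeq B a (i - 1)

/-- `braceChainAux B (i-1)` is `A^i`: `A^1 = A`, `A^{i+1}` the additive subgroup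
generated by `{x*y : x ∈ A, y ∈ A^i}`. -/
def braceChainAux {A : Type u} [AddCommGroup A] (B : LeftBrace A) : ℕ → AddSubgroup A
  | 0 => ⊤
  | i + 1 => AddSubgroup.closure {z : A | ∃ x : A, ∃ y ∈ braceChainAux B i, z = B.star x y}

/-- `dSeq B a b i = (d_i, d_i')`: `d_0 = a`, `d_0' = b`, `d_{i+1} = d_i + d_i'`,
`d_{i+1}' = d_i * d_i'`. -/
def dSeq {A : Type u} [AddCommGroup A] (B : LeftBrace A) (a b : A) : ℕ → A × A
  | 0 => (a, b)
  | i + 1 => ((dSeq B a b i).1 + (dSeq B a b i).2, B.star (dSeq B a b i).1 (dSeq B a b i).2)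

/-!
Let `0 = F₀ ⊆ F₁ ⊆ ⋯` be the series `F_{j+1} = {b | a * b ∈ F_j for all a}`. The `p`-group
`(A, ∘)` acts on `A` through `λ`, so whenever `F_j ≠ A` it fixes a nonzero class of `A ⧸ F_j`,
which lies in `F_{j+1}`; hence the series grows strictly and `F_n = A`.

Expanding `a^{∘m} = ∑ C(m, j+1) a_j` with `a_1 = a`, `a_{j+1} = a * a_j`, the prime `p` divides
`C(p, j+1)` for `j + 1 < p`, while `a_p = 0` once `a ∈ F_t` with `t < p`. This gives
`c^{∘p^i} = p^i (c + w)` with `w` one step lower in the series, so the `p^i`-th powers lie in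
`p^i A`; conversely `p^i c = c^{∘p^i} ∘ p^i x` with `x` one step lower, and induction along the
series puts `p^i A` inside every subgroup of `(A, ∘)` containing the powers. Being
`λ`-invariant, `p^i A` is a subgroup of `(A, ∘)`, and it is normal because the set of
`p^i`-th powers is closed under conjugation.
-/

open Finset

theorem Nat.Prime.dvd_of_dvd_pow_of_ne_one {p m n : ℕ} (hp : p.Prime) (hm : m ∣ p ^ n)
    (h1 : m ≠ 1) : p ∣ m := by
  obtain ⟨q, hq, hqm⟩ := Nat.ne_one_iff_exists_prime_dvd.1 h1
  rwa [← Nat.prime_eq_prime_of_dvd_pow hq hp (hqm.trans hm)]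

theorem AddSubgroup.prime_mul_card_dvd_card_of_lt {G : Type*} [AddGroup G] {p n : ℕ}
    (hp : p.Prime) (hG : Nat.card G = p ^ n) {H K : AddSubgroup G} (hHK : H < K) :
    p * Nat.card H ∣ Nat.card K := by
  have : Finite G := Nat.finite_of_card_ne_zero (hG ▸ pow_ne_zero n hp.ne_zero)
  obtain ⟨m, hm⟩ := AddSubgroup.card_dvd_of_le hHK.le
  have hm1 : m ≠ 1 := by
    rintro rfl
    exact hHK.ne (AddSubgroup.eq_of_le_of_card_ge hHK.le (by rw [hm, mul_one]))
  have hpm := hp.dvd_of_dvd_pow_of_ne_one (hG ▸ (Dvd.intro_left _ hm.symm).trans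
    (AddSubgroup.card_addSubgroup_dvd_card K)) hm1
  rw [hm, mul_comm p]
  exact mul_dvd_mul_left _ hpm

namespace LeftBrace

variable {A : Type u} [AddCommGroup A] (B : LeftBrace A)

theorem circ_zero (a : A) : B.circ a 0 = a := by
  have h := B.circ_add a 0 a
  rw [zero_add, add_comm (B.circ a 0)] at h
  exact (add_left_cancel h).symm

theorem one_eq_zero : B.one = 0 := by
  simpa only [B.one_circ] using (B.circ_zero B.one).symm

def CircGroup (_B : LeftBrace A) : Type u := A

instance : Group B.CircGroup where
  mul := B.circ
  one := B.one
  inv := B.inv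
  mul_assoc := B.circ_assoc
  one_mul := B.one_circ
  mul_one := B.circ_one
  inv_mul_cancel := B.inv_circ

def toCirc : A ≃ B.CircGroup := Equiv.refl A

theorem toCirc_circ (a b : A) : B.toCirc (B.circ a b) = B.toCirc a * B.toCirc b := rfl

theorem toCirc_one : B.toCirc B.one = 1 := rfl

theorem circ_inv (a : A) : B.circ a (B.inv a) = B.one :=
  B.toCirc.injective (mul_inv_cancel (B.toCirc a))

theorem toCirc_circPow (a : A) (m : ℕ) : B.toCirc (circPow B a m) = B.toCirc a ^ m := by
  induction m with
  | zero => rfl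
  | succ m ih => rw [pow_succ', ← ih]; rfl

theorem toCirc_symm_pow (a : B.CircGroup) (m : ℕ) :
    B.toCirc.symm (a ^ m) = circPow B (B.toCirc.symm a) m := by
  rw [Equiv.symm_apply_eq, toCirc_circPow, Equiv.apply_symm_apply]

theorem circPow_one (a : A) : circPow B a 1 = a :=
  B.circ_one a

theorem circPow_mul (a : A) (s t : ℕ) :
    circPow B a (s * t) = circPow B (circPow B a s) t :=
  B.toCirc.injective (by simp only [toCirc_circPow, pow_mul])

def lam (a : A) : A →+ A where
  toFun x := B.circ a x - a
  map_zero' := by simp only [circ_zero, sub_self]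
  map_add' x y := by
    rw [eq_sub_of_add_eq (B.circ_add a x y)]
    abel

theorem lam_apply (a x : A) : B.lam a x = B.circ a x - a := rfl

theorem circ_eq_add_lam (a x : A) : B.circ a x = a + B.lam a x := by
  rw [lam_apply, add_sub_cancel]

theorem lam_circ (a b x : A) : B.lam (B.circ a b) x = B.lam a (B.lam b x) := by
  rw [lam_apply B (B.circ a b), lam_apply B b, map_sub, lam_apply, lam_apply, B.circ_assoc]
  abel

theorem lam_one (x : A) : B.lam B.one x = x := by
  rw [lam_apply, one_circ, one_eq_zero, sub_zero]

theorem lam_lam_inv (a x : A) : B.lam a (B.lam (B.inv a) x) = x := by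
  rw [← lam_circ, circ_inv, lam_one]

theorem inv_eq_lam_neg (a : A) : B.inv a = B.lam (B.inv a) (-a) := by
  have h := B.inv_circ a
  rw [circ_eq_add_lam, one_eq_zero] at h
  rw [map_neg]
  exact eq_neg_of_add_eq_zero_left h

def starHom (a : A) : A →+ A := B.lam a - AddMonoidHom.id A

theorem starHom_apply (a x : A) : B.starHom a x = B.star a x := rfl

theorem star_eq_lam_sub (a x : A) : B.star a x = B.lam a x - x := rfl

theorem circ_eq_add_add_star (a x : A) : B.circ a x = a + x + B.star a x := by
  rw [star_eq_lam_sub, circ_eq_add_lam]; abel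

def upperSeries (B : LeftBrace A) : ℕ → AddSubgroup A
  | 0 => ⊥
  | j + 1 => ⨅ a, (B.upperSeries j).comap (B.starHom a)

theorem upperSeries_zero : B.upperSeries 0 = ⊥ := rfl

theorem mem_upperSeries_succ {j : ℕ} {b : A} :
    b ∈ B.upperSeries (j + 1) ↔ ∀ a, B.star a b ∈ B.upperSeries j := by
  simp only [upperSeries, AddSubgroup.mem_iInf, AddSubgroup.mem_comap, starHom_apply]

theorem star_mem_upperSeries_pred {t : ℕ} {b : A} (hb : b ∈ B.upperSeries t) (a : A) :
    B.star a b ∈ B.upperSeries (t - 1) := by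
  cases t with
  | zero =>
    rw [upperSeries_zero, AddSubgroup.mem_bot] at hb
    rw [hb, ← starHom_apply, map_zero]
    exact zero_mem _
  | succ t => exact (B.mem_upperSeries_succ.1 hb) a

theorem lam_mem_upperSeries {t : ℕ} {b : A} (hb : b ∈ B.upperSeries t) (a : A) :
    B.lam a b ∈ B.upperSeries t := by
  induction t generalizing b with
  | zero =>
    rw [upperSeries_zero, AddSubgroup.mem_bot] at hb ⊢
    rw [hb, map_zero]
  | succ t ih =>
    rw [mem_upperSeries_succ] at hb ⊢
    intro c
    have h : B.star c (B.lam a b) = B.star (B.circ c a) b - B.star a b := by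
      simp only [star_eq_lam_sub, lam_circ]
      abel
    rw [h]
    exact sub_mem (hb _) (hb _)

theorem upperSeries_le_succ (t : ℕ) : B.upperSeries t ≤ B.upperSeries (t + 1) := fun _ hb =>
  B.mem_upperSeries_succ.2 fun a => sub_mem (B.lam_mem_upperSeries hb a) hb

theorem upperSeries_mono : Monotone B.upperSeries :=
  monotone_nat_of_le_succ B.upperSeries_le_succ

theorem exists_notMem_forall_star_mem {p n : ℕ} (hp : p.Prime) (hcard : Nat.card A = p ^ n)
    {F : AddSubgroup A} (hF : ∀ a, F ≤ F.comap (B.lam a)) (hne : F ≠ ⊤) :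
    ∃ b ∉ F, ∀ a, B.star a b ∈ F := by
  have : Fact p.Prime := ⟨hp⟩
  let _ : MulAction B.CircGroup (A ⧸ F) :=
    { smul a := QuotientAddGroup.map F F (B.lam (B.toCirc.symm a)) (hF _)
      one_smul q := QuotientAddGroup.induction_on q fun x =>
        congrArg QuotientAddGroup.mk (B.lam_one x)
      mul_smul a b q := QuotientAddGroup.induction_on q fun x =>
        congrArg QuotientAddGroup.mk (B.lam_circ a b x) }
  have : Finite A := Nat.finite_of_card_ne_zero (hcard ▸ pow_ne_zero n hp.ne_zero)
  have hdvd : p ∣ Nat.card (A ⧸ F) :=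
    hp.dvd_of_dvd_pow_of_ne_one (hcard ▸ F.index_dvd_card) (mt AddSubgroup.index_eq_one.1 hne)
  have hG : IsPGroup p B.CircGroup := IsPGroup.of_card hcard
  obtain ⟨q, hq, hq0⟩ := hG.exists_fixed_point_of_prime_dvd_card_of_fixed_point _ hdvd
    (a := 0) fun a => map_zero (QuotientAddGroup.map F F (B.lam (B.toCirc.symm a)) (hF _))
  obtain ⟨b, rfl⟩ := QuotientAddGroup.mk_surjective q
  refine ⟨b, fun hb => hq0 ((QuotientAddGroup.eq_zero_iff b).2 hb).symm, fun a => ?_⟩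
  have h := QuotientAddGroup.eq.1 (hq (B.toCirc a))
  rw [star_eq_lam_sub, ← neg_sub, sub_eq_neg_add]
  exact neg_mem h

theorem upperSeries_lt_succ {p n : ℕ} (hp : p.Prime) (hcard : Nat.card A = p ^ n) {j : ℕ}
    (hj : B.upperSeries j ≠ ⊤) : B.upperSeries j < B.upperSeries (j + 1) := by
  obtain ⟨b, hb, hstar⟩ := B.exists_notMem_forall_star_mem hp hcard
    (fun a _ hx => B.lam_mem_upperSeries hx a) hj
  exact lt_of_le_of_ne (B.upperSeries_le_succ j)
    fun h => hb (h ▸ B.mem_upperSeries_succ.2 hstar)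

theorem upperSeries_eq_top {p n : ℕ} (hp : p.Prime) (hcard : Nat.card A = p ^ n) :
    B.upperSeries n = ⊤ := by
  have : Finite A := Nat.finite_of_card_ne_zero (hcard ▸ pow_ne_zero n hp.ne_zero)
  have key : ∀ j, B.upperSeries j = ⊤ ∨ p ^ j ∣ Nat.card (B.upperSeries j) := by
    intro j
    induction j with
    | zero => exact Or.inr (by rw [pow_zero]; exact one_dvd _)
    | succ j ih =>
      by_cases htop : B.upperSeries j = ⊤
      · exact Or.inl (eq_top_mono (B.upperSeries_le_succ j) htop)
      refine Or.inr ((pow_succ' p j ▸ mul_dvd_mul_left p (ih.resolve_left htop)).trans ?_)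
      exact AddSubgroup.prime_mul_card_dvd_card_of_lt hp hcard (B.upperSeries_lt_succ hp hcard htop)
  refine (key n).elim id fun hdvd => AddSubgroup.eq_top_of_card_eq _ ?_
  exact (Nat.dvd_antisymm (hcard ▸ AddSubgroup.card_addSubgroup_dvd_card _) hdvd).trans hcard.symm

theorem circPow_eq_sum_choose (a : A) (m : ℕ) :
    circPow B a m = ∑ j ∈ range m, m.choose (j + 1) • iterOp B.star a a j := by
  induction m with
  | zero => simp only [circPow, one_eq_zero, range_zero, sum_empty]
  | succ m ih =>
    have hstar : B.star a (circPow B a m) =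
        ∑ j ∈ range m, m.choose (j + 1) • iterOp B.star a a (j + 1) := by
      simp only [ih, ← starHom_apply, map_sum, map_nsmul]
      rfl
    have hshift : ∑ j ∈ range m, m.choose (j + 1) • iterOp B.star a a j =
        ∑ j ∈ range m, m.choose (j + 1 + 1) • iterOp B.star a a (j + 1) + m • a := by
      rw [← add_zero (∑ j ∈ range m, _), ← zero_smul ℕ (iterOp B.star a a m),
        ← Nat.choose_succ_self m, ← sum_range_succ, sum_range_succ', zero_add,
        Nat.choose_one_right]
      rfl
    rw [show circPow B a (m + 1) = B.circ a (circPow B a m) from rfl, circ_eq_add_add_star, hstar,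
      ih, hshift, sum_range_succ']
    simp only [Nat.choose_succ_succ' m, add_smul, sum_add_distrib, Nat.choose_zero_right,
      Nat.choose_one_right, one_smul, zero_add]
    rw [show iterOp B.star a a 0 = a from rfl]
    abel

theorem iterOp_star_nsmul (b c : A) (k j : ℕ) :
    iterOp B.star b (k • c) j = k • iterOp B.star b c j := by
  induction j with
  | zero => rfl
  | succ j ih => simp only [iterOp, ih, ← starHom_apply, map_nsmul]

theorem iterOp_star_mem_upperSeries {t : ℕ} {c : A} (hc : c ∈ B.upperSeries t) (b : A) (j : ℕ) :
    iterOp B.star b c j ∈ B.upperSeries (t - j) := by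
  induction j with
  | zero => exact hc
  | succ j ih => exact Nat.sub_sub t j 1 ▸ B.star_mem_upperSeries_pred ih b

theorem circPow_prime_nsmul {p t : ℕ} (hp : p.Prime) (ht : t < p) {c : A}
    (hc : c ∈ B.upperSeries t) (k : ℕ) :
    ∃ w ∈ B.upperSeries (t - 1), circPow B (k • c) p = (p * k) • (c + w) := by
  obtain ⟨m, rfl⟩ : ∃ m, p = m + 1 := ⟨p - 1, (Nat.sub_add_cancel hp.one_le).symm⟩
  set e := iterOp B.star (k • c) c
  have he : ∀ j, e j ∈ B.upperSeries (t - j) := B.iterOp_star_mem_upperSeries hc _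
  have hterm : ∀ j ∈ range m, (m + 1).choose (j + 1 + 1) • e (j + 1) =
      (m + 1) • ((m + 1).choose (j + 1 + 1) / (m + 1)) • e (j + 1) := by
    intro j hj
    rcases (Nat.succ_le_of_lt (mem_range.1 hj)).lt_or_eq with hjm | hjm
    · rw [smul_smul, Nat.mul_div_cancel' (hp.dvd_choose_self (by omega) (by omega))]
    · have he0 := he (j + 1)
      rw [show t - (j + 1) = 0 by omega, upperSeries_zero, AddSubgroup.mem_bot] at he0
      rw [he0, smul_zero, smul_zero, smul_zero]
  refine ⟨∑ j ∈ range m, ((m + 1).choose (j + 1 + 1) / (m + 1)) • e (j + 1),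
    sum_mem fun j _ => AddSubgroup.nsmul_mem _ (B.upperSeries_mono (by omega) (he _)) _, ?_⟩
  have hk : ∑ j ∈ range (m + 1), (m + 1).choose (j + 1) • iterOp B.star (k • c) (k • c) j =
      k • ∑ j ∈ range (m + 1), (m + 1).choose (j + 1) • e j := by
    rw [smul_sum]
    exact sum_congr rfl fun j _ => by rw [iterOp_star_nsmul, smul_comm]
  rw [circPow_eq_sum_choose, hk, sum_range_succ', sum_congr rfl hterm, ← smul_sum, zero_add,
    Nat.choose_one_right, show e 0 = c from rfl, ← smul_add, smul_smul, mul_comm k, add_comm _ c]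

theorem circPow_prime_pow {p t : ℕ} (hp : p.Prime) (ht : t < p) {c : A}
    (hc : c ∈ B.upperSeries t) (i : ℕ) :
    ∃ w ∈ B.upperSeries (t - 1), circPow B c (p ^ i) = p ^ i • (c + w) := by
  induction i with
  | zero =>
    refine ⟨0, zero_mem _, ?_⟩
    rw [pow_zero, one_smul, add_zero, circPow_one]
  | succ i ih =>
    obtain ⟨w, hw, hpow⟩ := ih
    have hcw : c + w ∈ B.upperSeries t := add_mem hc (B.upperSeries_mono (Nat.sub_le t 1) hw)
    obtain ⟨w', hw', hpow'⟩ := B.circPow_prime_nsmul hp ht hcw (p ^ i)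
    refine ⟨w + w', add_mem hw hw', ?_⟩
    rw [pow_succ, B.circPow_mul c, hpow, hpow', mul_comm p, add_assoc]

theorem toCirc_nsmul_mem_of_pow_mem {p i t : ℕ} (hp : p.Prime) (ht : t < p)
    {H : Subgroup B.CircGroup} (hH : ∀ a : B.CircGroup, a ^ p ^ i ∈ H) {c : A}
    (hc : c ∈ B.upperSeries t) : B.toCirc (p ^ i • c) ∈ H := by
  induction t generalizing c with
  | zero =>
    rw [upperSeries_zero, AddSubgroup.mem_bot] at hc
    rw [hc, smul_zero, ← B.one_eq_zero, toCirc_one]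
    exact H.one_mem
  | succ t ih =>
    obtain ⟨w, hw, hpow⟩ := B.circPow_prime_pow hp ht hc i
    set u := circPow B c (p ^ i)
    -- `p^i • c = u ∘ x` for an `x ∈ p^i • F_t`, which lies in `H` by induction.
    have hcirc : B.circ u (p ^ i • -B.lam (B.inv u) w) = p ^ i • c := by
      rw [circ_eq_add_lam, map_nsmul, map_neg, lam_lam_inv, hpow, smul_neg, smul_add,
        add_neg_cancel_right]
    rw [← hcirc, toCirc_circ, toCirc_circPow]
    exact H.mul_mem (hH _) (ih (by omega) (neg_mem (B.lam_mem_upperSeries hw _)))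

def nsmulSubgroup (k : ℕ) : Subgroup B.CircGroup where
  carrier := {x | ∃ a : A, x = B.toCirc (k • a)}
  one_mem' := ⟨0, by rw [smul_zero, ← one_eq_zero, toCirc_one]⟩
  mul_mem' := by
    rintro _ _ ⟨a, rfl⟩ ⟨b, rfl⟩
    exact ⟨a + B.lam (k • a) b, by rw [← toCirc_circ, circ_eq_add_lam, smul_add, map_nsmul]⟩
  inv_mem' := by
    rintro _ ⟨a, rfl⟩
    refine ⟨B.lam (B.inv (k • a)) (-a), (B.inv_eq_lam_neg (k • a)).trans ?_⟩
    rw [map_neg, map_neg, map_nsmul, smul_neg]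
    rfl

theorem toCirc_mem_nsmulSubgroup {k : ℕ} {x : A} :
    B.toCirc x ∈ B.nsmulSubgroup k ↔ ∃ a, x = k • a :=
  exists_congr fun _ => B.toCirc.injective.eq_iff

theorem lam_mem_nsmulSubgroup {k : ℕ} (a : A) {x : A} (hx : B.toCirc x ∈ B.nsmulSubgroup k) :
    B.toCirc (B.lam a x) ∈ B.nsmulSubgroup k := by
  obtain ⟨c, rfl⟩ := B.toCirc_mem_nsmulSubgroup.1 hx
  exact B.toCirc_mem_nsmulSubgroup.2 ⟨B.lam a c, map_nsmul _ _ _⟩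

theorem pow_mem_nsmulSubgroup {p n : ℕ} (hp : p.Prime) (hcard : Nat.card A = p ^ n)
    (hnp : n < p) (i : ℕ) (a : B.CircGroup) : a ^ p ^ i ∈ B.nsmulSubgroup (p ^ i) := by
  have ha : B.toCirc.symm a ∈ B.upperSeries n :=
    B.upperSeries_eq_top hp hcard ▸ AddSubgroup.mem_top _
  obtain ⟨w, -, hpow⟩ := B.circPow_prime_pow hp hnp ha i
  exact ⟨_, by rw [← hpow, toCirc_circPow, Equiv.apply_symm_apply]⟩

theorem nsmulSubgroup_le {p n : ℕ} (hp : p.Prime) (hcard : Nat.card A = p ^ n) (hnp : n < p)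
    {i : ℕ} {H : Subgroup B.CircGroup} (hH : ∀ a : B.CircGroup, a ^ p ^ i ∈ H) :
    B.nsmulSubgroup (p ^ i) ≤ H := by
  rintro _ ⟨c, rfl⟩
  exact B.toCirc_nsmul_mem_of_pow_mem hp hnp hH
    (B.upperSeries_eq_top hp hcard ▸ AddSubgroup.mem_top c)

theorem nsmulSubgroup_normal {p n : ℕ} (hp : p.Prime) (hcard : Nat.card A = p ^ n)
    (hnp : n < p) (i : ℕ) : (B.nsmulSubgroup (p ^ i)).Normal where
  conj_mem x hx g := by
    refine B.nsmulSubgroup_le hp hcard hnp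
      (H := (B.nsmulSubgroup (p ^ i)).comap (MulAut.conj g).toMonoidHom) (fun a => ?_) hx
    rw [Subgroup.mem_comap, MulEquiv.coe_toMonoidHom, MulAut.conj_apply, ← conj_pow]
    exact B.pow_mem_nsmulSubgroup hp hcard hnp i _

end LeftBrace

/-- `p^i·A` is an ideal of the brace `A` (a normal subgroup of `(A,∘)`
closed under all `λ_a`), and it equals `A^{∘p^i}`, the subgroup of `(A,∘)` generated by
the `p^i`-th `∘`-powers (it contains all `a^{∘p^i}` and is contained in every subgroup of
`(A,∘)` containing them). -/
theorem stmt_14 (p n i : ℕ) (hp : p.Prime) (hpn : n + 1 < p)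
    (A : Type u) [AddCommGroup A] (B : LeftBrace A) (hcard : Nat.card A = p ^ n) :
    ∀ S : Set A, S = {x : A | ∃ a : A, x = p ^ i • a} →
      (B.one ∈ S ∧
        (∀ x ∈ S, ∀ y ∈ S, B.circ x y ∈ S) ∧
        (∀ x ∈ S, B.inv x ∈ S) ∧
        (∀ g : A, ∀ x ∈ S, B.circ (B.circ g x) (B.inv g) ∈ S) ∧
        (∀ a : A, ∀ x ∈ S, B.circ a x - a ∈ S)) ∧
      (∀ a : A, circPow B a (p ^ i) ∈ S) ∧
      (∀ T : Set A, B.one ∈ T → (∀ x ∈ T, ∀ y ∈ T, B.circ x y ∈ T) →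
        (∀ x ∈ T, B.inv x ∈ T) → (∀ a : A, circPow B a (p ^ i) ∈ T) → S ⊆ T) := by
  rintro S rfl
  have hnp : n < p := by omega
  set I := B.nsmulSubgroup (p ^ i)
  have hmem (x : A) : x ∈ {x : A | ∃ a : A, x = p ^ i • a} ↔ B.toCirc x ∈ I :=
    B.toCirc_mem_nsmulSubgroup.symm
  refine ⟨⟨?_, ?_, ?_, ?_, ?_⟩, ?_, ?_⟩
  · exact (hmem _).2 I.one_mem
  · exact fun x hx y hy => (hmem _).2 (I.mul_mem ((hmem x).1 hx) ((hmem y).1 hy))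
  · exact fun x hx => (hmem _).2 (I.inv_mem ((hmem x).1 hx))
  · exact fun g x hx => (hmem _).2
      ((B.nsmulSubgroup_normal hp hcard hnp i).conj_mem _ ((hmem x).1 hx) (B.toCirc g))
  · exact fun a x hx => (hmem _).2 (B.lam_mem_nsmulSubgroup a ((hmem x).1 hx))
  · exact fun a => (hmem _).2 (B.toCirc_circPow a _ ▸ B.pow_mem_nsmulSubgroup hp hcard hnp i _)
  · intro T h1 h2 h3 h4 x hx
    let H : Subgroup B.CircGroup :=
      { carrier := B.toCirc.symm ⁻¹' T
        mul_mem' := fun ha hb => h2 _ ha _ hb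
        one_mem' := h1
        inv_mem' := fun ha => h3 _ ha }
    exact B.nsmulSubgroup_le hp hcard hnp (H := H)
      (fun a => show B.toCirc.symm (a ^ p ^ i) ∈ T by rw [B.toCirc_symm_pow]; exact h4 _)
      ((hmem x).1 hx)
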